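/- For the Schlögl system with control reactions, with propensities f₁ = S₁k₁ (jump +1), f₂(x) = k₂x (jump −1), f₃(x) = (S₂k₃/2)x(x−1) (jump +1), f₄(x) = (k₄/6)x(x−1)(x−2) (jump −1), f₅ = K (jump +1), f₆(x) = Kx (jump −1), f₇(x) = Kx (jump +1), the CFPE drift A(x) = Σᵢ[−rᵢfᵢ + (rᵢ²/2)fᵢ'] satisfies ∂A/∂K = 0, and the diffusion B(x) = (1/2)Σᵢ rᵢ² fᵢ satisfies ∂B/∂K(x) = x + 1/2 > 0 for all x ≥ 0. -/
import Mathlib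


open Real

/-- Schlögl system with control reactions: drift independent of K,
    diffusion strictly increasing in K on x ≥ 0. -/
theorem stmt_8 (S₁ k₁ S₂ k₃ k₂ k₄ : ℝ)
    (f₁ f₂ f₃ f₄ f₅ f₆ f₇ : ℝ → ℝ → ℝ)
    (hf₁ : ∀ K x, f₁ K x = S₁ * k₁)
    (hf₂ : ∀ K x, f₂ K x = k₂ * x)
    (hf₃ : ∀ K x, f₃ K x = S₂ * k₃ / 2 * (x * (x - 1)))
    (hf₄ : ∀ K x, f₄ K x = k₄ / 6 * (x * (x - 1) * (x - 2)))
    (hf₅ : ∀ K x, f₅ K x = K)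
    (hf₆ : ∀ K x, f₆ K x = K * x)
    (hf₇ : ∀ K x, f₇ K x = K * x)
    (A B : ℝ → ℝ → ℝ)
    (hA : ∀ K x, A K x =
      (-(1 : ℝ) * f₁ K x + (1 : ℝ) ^ 2 / 2 * deriv (f₁ K) x) +
      (-(-1 : ℝ) * f₂ K x + (-1 : ℝ) ^ 2 / 2 * deriv (f₂ K) x) +
      (-(1 : ℝ) * f₃ K x + (1 : ℝ) ^ 2 / 2 * deriv (f₃ K) x) +
      (-(-1 : ℝ) * f₄ K x + (-1 : ℝ) ^ 2 / 2 * deriv (f₄ K) x) +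
      (-(1 : ℝ) * f₅ K x + (1 : ℝ) ^ 2 / 2 * deriv (f₅ K) x) +
      (-(-1 : ℝ) * f₆ K x + (-1 : ℝ) ^ 2 / 2 * deriv (f₆ K) x) +
      (-(1 : ℝ) * f₇ K x + (1 : ℝ) ^ 2 / 2 * deriv (f₇ K) x))
    (hB : ∀ K x, B K x = (1 / 2) *
      ((1 : ℝ) ^ 2 * f₁ K x + (-1 : ℝ) ^ 2 * f₂ K x + (1 : ℝ) ^ 2 * f₃ K x +
       (-1 : ℝ) ^ 2 * f₄ K x + (1 : ℝ) ^ 2 * f₅ K x + (-1 : ℝ) ^ 2 * f₆ K x +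
       (1 : ℝ) ^ 2 * f₇ K x)) :
    (∀ K x, deriv (fun K' => A K' x) K = 0) ∧
    (∀ K x, 0 ≤ x →
      deriv (fun K' => B K' x) K = x + 1 / 2 ∧ 0 < x + 1 / 2) := by
  have d1 : ∀ K x : ℝ, deriv (f₁ K) x = 0 := by
    intro K x
    have h : f₁ K = fun _ => S₁ * k₁ := funext (hf₁ K)
    rw [h]; first
      | simp
      | simpa using ((hasDerivAt_id x).const_mul _).deriv
  have d2 : ∀ K x : ℝ, deriv (f₂ K) x = k₂ := by
    intro K x
    have h : f₂ K = fun x => k₂ * x := funext (hf₂ K)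
    rw [h]; first
      | simp
      | simpa using ((hasDerivAt_id x).const_mul _).deriv
  have d3 : ∀ K x : ℝ, deriv (f₃ K) x = S₂ * k₃ / 2 * (1 * (x - 1) + x * 1) := by
    intro K x
    have h : f₃ K = fun x => S₂ * k₃ / 2 * (x * (x - 1)) := funext (hf₃ K)
    rw [h]
    exact (((hasDerivAt_id x).mul ((hasDerivAt_id x).sub_const 1)).const_mul (S₂ * k₃ / 2)).deriv
  have d4 : ∀ K x : ℝ, deriv (f₄ K) x =
      k₄ / 6 * ((1 * (x - 1) + x * 1) * (x - 2) + x * (x - 1) * 1) := by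
    intro K x
    have h : f₄ K = fun x => k₄ / 6 * (x * (x - 1) * (x - 2)) := funext (hf₄ K)
    rw [h]
    exact ((((hasDerivAt_id x).mul ((hasDerivAt_id x).sub_const 1)).mul
      ((hasDerivAt_id x).sub_const 2)).const_mul (k₄ / 6)).deriv
  have d5 : ∀ K x : ℝ, deriv (f₅ K) x = 0 := by
    intro K x
    have h : f₅ K = fun _ => K := funext (hf₅ K)
    rw [h]; first
      | simp
      | simpa using ((hasDerivAt_id x).const_mul _).deriv
  have d6 : ∀ K x : ℝ, deriv (f₆ K) x = K := by
    intro K x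
    have h : f₆ K = fun x => K * x := funext (hf₆ K)
    rw [h]; first
      | simp
      | simpa using ((hasDerivAt_id x).const_mul _).deriv
  have d7 : ∀ K x : ℝ, deriv (f₇ K) x = K := by
    intro K x
    have h : f₇ K = fun x => K * x := funext (hf₇ K)
    rw [h]; first
      | simp
      | simpa using ((hasDerivAt_id x).const_mul _).deriv
  constructor
  · intro K x
    have h : (fun K' => A K' x) = fun _ => A 0 x := by
      funext K'
      rw [hA, hA, hf₁, hf₁, hf₂, hf₂, hf₃, hf₃, hf₄, hf₄, hf₅, hf₅, hf₆, hf₆, hf₇, hf₇,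
        d1, d1, d2, d2, d3, d3, d4, d4, d5, d5, d6, d6, d7, d7]
      ring
    rw [h]; first
      | simp
      | simpa using ((hasDerivAt_id x).const_mul _).deriv
  · intro K x hx
    refine ⟨?_, by linarith⟩
    have h : (fun K' => B K' x) = fun K' =>
        (1 / 2) * (S₁ * k₁ + k₂ * x + S₂ * k₃ / 2 * (x * (x - 1)) +
          k₄ / 6 * (x * (x - 1) * (x - 2))) + (x + 1 / 2) * K' := by
      funext K'
      rw [hB, hf₁, hf₂, hf₃, hf₄, hf₅, hf₆, hf₇]
      ring
    rw [h]
    have := (((hasDerivAt_id K).const_mul (x + 1 / 2)).const_add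
      ((1 / 2) * (S₁ * k₁ + k₂ * x + S₂ * k₃ / 2 * (x * (x - 1)) +
        k₄ / 6 * (x * (x - 1) * (x - 2))))).deriv
    simpa using this
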